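/- Let (G,·,e,⊙) be a left group-e-semigroup and suppose e⊙e is central in (G,⊙), i.e. (e⊙e)⊙x = x⊙(e⊙e) for all x ∈ G. Then e⊙G is the least ideal of (G,⊙): e⊙G is an ideal and e⊙G ⊆ I for every ideal I of (G,⊙); and e⊙G is the largest subgroup of (G,⊙) containing e⊙e: e⊙G is a subgroup of (G,⊙) containing e⊙e, and every subset H ⊆ G that is closed under ⊙, forms a group under ⊙, and contains e⊙e satisfies H ⊆ e⊙G. -/

import Mathlib

/-!
The left `e`-join law gives `(e ⊙ x) ⊙ y = e ⊙ (x y)`. Hence any ideal containing some `i`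
contains `(e ⊙ (x i⁻¹)) ⊙ i = e ⊙ x` for every `x`. When `e ⊙ e` is central, also
`(e ⊙ x) ⊙ (e ⊙ y) = e ⊙ (x y)`, so `x ↦ e ⊙ x` maps the group `(G, ·)` homomorphically onto
`(e ⊙ G, ⊙)`, which is therefore a group. Finally a subgroup `H` of `(G, ⊙)` containing `e ⊙ e`
contains a `⊙`-inverse `b` of `e ⊙ e`, so each `a ∈ H` is `(e ⊙ e) ⊙ (b ⊙ a) = e ⊙ (b ⊙ a)`.
-/

/-- A subset `I` is an ideal of the semigroup `(G, op)`. -/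
def IsMagmaIdeal {G : Type*} (op : G → G → G) (I : Set G) : Prop :=
  ∀ x : G, ∀ i ∈ I, op x i ∈ I ∧ op i x ∈ I

/-- A subset `H` is a subgroup of the semigroup `(G, op)`: it is closed under `op`
and forms a group under `op`. -/
def IsSubgroupUnder {G : Type*} (op : G → G → G) (H : Set G) : Prop :=
  (∀ a ∈ H, ∀ b ∈ H, op a b ∈ H) ∧
  ∃ ι ∈ H, (∀ a ∈ H, op ι a = a ∧ op a ι = a) ∧
    ∀ a ∈ H, ∃ b ∈ H, op a b = ι ∧ op b a = ι

theorem subset_range_op_of_isSubgroupUnder {G : Type*} {op : G → G → G}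
    (hassoc : ∀ x y z : G, op (op x y) z = op x (op y z)) {H : Set G}
    (hH : IsSubgroupUnder op H) {c : G} (hc : c ∈ H) : H ⊆ Set.range (op c) := by
  obtain ⟨-, ι, -, hid, hinv⟩ := hH
  obtain ⟨b, -, hcb, -⟩ := hinv c hc
  intro a ha
  exact ⟨op b a, by rw [← hassoc, hcb, (hid a ha).1]⟩

namespace LeftGroupESemigroup

variable {G : Type*} [Group G] {op : G → G → G}

theorem op_op_one_left (hassoc : ∀ x y z : G, op (op x y) z = op x (op y z))
    (hjoin : ∀ x y : G, op 1 (x * y) = op 1 (op x y)) (x y : G) :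
    op (op 1 x) y = op 1 (x * y) := by
  rw [hassoc, hjoin]

theorem op_op_one_one (hassoc : ∀ x y z : G, op (op x y) z = op x (op y z))
    (hjoin : ∀ x y : G, op 1 (x * y) = op 1 (op x y)) (x : G) :
    op (op 1 1) x = op 1 x := by
  rw [op_op_one_left hassoc hjoin, one_mul]

theorem op_one_op_one (hassoc : ∀ x y z : G, op (op x y) z = op x (op y z))
    (hjoin : ∀ x y : G, op 1 (x * y) = op 1 (op x y)) (x : G) :
    op 1 (op 1 x) = op 1 x := by
  rw [← hassoc, op_op_one_one hassoc hjoin]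

theorem op_one_op_comm (hassoc : ∀ x y z : G, op (op x y) z = op x (op y z))
    (hjoin : ∀ x y : G, op 1 (x * y) = op 1 (op x y))
    (hcentral : ∀ x : G, op (op 1 1) x = op x (op 1 1)) (x y : G) :
    op 1 (op x y) = op x (op 1 y) := by
  rw [← op_op_one_one hassoc hjoin, ← hassoc, hcentral, hassoc, op_op_one_one hassoc hjoin]

theorem op_op_one_op_one (hassoc : ∀ x y z : G, op (op x y) z = op x (op y z))
    (hjoin : ∀ x y : G, op 1 (x * y) = op 1 (op x y))
    (hcentral : ∀ x : G, op (op 1 1) x = op x (op 1 1)) (x y : G) :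
    op (op 1 x) (op 1 y) = op 1 (x * y) := by
  rw [← op_one_op_comm hassoc hjoin hcentral, op_op_one_left hassoc hjoin,
    op_one_op_one hassoc hjoin]

theorem isMagmaIdeal_range_op_one (hassoc : ∀ x y z : G, op (op x y) z = op x (op y z))
    (hjoin : ∀ x y : G, op 1 (x * y) = op 1 (op x y))
    (hcentral : ∀ x : G, op (op 1 1) x = op x (op 1 1)) :
    IsMagmaIdeal op (Set.range (op 1)) := by
  rintro x _ ⟨a, rfl⟩
  exact ⟨⟨op x a, op_one_op_comm hassoc hjoin hcentral x a⟩,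
    ⟨a * x, (op_op_one_left hassoc hjoin a x).symm⟩⟩

theorem range_op_one_subset_of_isMagmaIdeal
    (hassoc : ∀ x y z : G, op (op x y) z = op x (op y z))
    (hjoin : ∀ x y : G, op 1 (x * y) = op 1 (op x y)) {I : Set G} (hne : I.Nonempty)
    (hI : IsMagmaIdeal op I) : Set.range (op 1) ⊆ I := by
  obtain ⟨i, hi⟩ := hne
  rintro _ ⟨x, rfl⟩
  have hx : op (op 1 (x * i⁻¹)) i = op 1 x := by
    rw [op_op_one_left hassoc hjoin, inv_mul_cancel_right]
  exact hx ▸ (hI _ i hi).1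

theorem isSubgroupUnder_range_op_one (hassoc : ∀ x y z : G, op (op x y) z = op x (op y z))
    (hjoin : ∀ x y : G, op 1 (x * y) = op 1 (op x y))
    (hcentral : ∀ x : G, op (op 1 1) x = op x (op 1 1)) :
    IsSubgroupUnder op (Set.range (op 1)) := by
  have hmul := op_op_one_op_one hassoc hjoin hcentral
  refine ⟨?_, op 1 1, ⟨1, rfl⟩, ?_, ?_⟩
  · rintro _ ⟨x, rfl⟩ _ ⟨y, rfl⟩
    exact ⟨x * y, (hmul x y).symm⟩
  · rintro _ ⟨x, rfl⟩
    simp only [hmul, one_mul, mul_one, and_self]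
  · rintro _ ⟨x, rfl⟩
    exact ⟨op 1 x⁻¹, ⟨x⁻¹, rfl⟩, by rw [hmul, mul_inv_cancel], by rw [hmul, inv_mul_cancel]⟩

end LeftGroupESemigroup

open LeftGroupESemigroup in
/-- In a left group-`e`-semigroup `(G, ·, e, ⊙)` (group identity `e = 1`)
in which `e ⊙ e` is central in `(G, ⊙)`, the set `e ⊙ G` is the least (nonempty) ideal of
`(G, ⊙)` and the largest subgroup of `(G, ⊙)` containing `e ⊙ e`. -/
theorem stmt_3 {G : Type*} [Group G] (op : G → G → G)
    (hassoc : ∀ x y z : G, op (op x y) z = op x (op y z))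
    (hjoin : ∀ x y : G, op 1 (x * y) = op 1 (op x y))
    (hcentral : ∀ x : G, op (op 1 1) x = op x (op 1 1)) :
    (IsMagmaIdeal op (Set.range (op 1)) ∧
      ∀ I : Set G, I.Nonempty → IsMagmaIdeal op I → Set.range (op 1) ⊆ I) ∧
    (IsSubgroupUnder op (Set.range (op 1)) ∧ op 1 1 ∈ Set.range (op 1) ∧
      ∀ H : Set G, IsSubgroupUnder op H → op 1 1 ∈ H → H ⊆ Set.range (op 1)) := by
  have hrange : op (op 1 1) = op 1 := funext (op_op_one_one hassoc hjoin)
  refine ⟨⟨isMagmaIdeal_range_op_one hassoc hjoin hcentral,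
      fun I hne hI => range_op_one_subset_of_isMagmaIdeal hassoc hjoin hne hI⟩,
    isSubgroupUnder_range_op_one hassoc hjoin hcentral, ⟨1, rfl⟩, fun H hH hc => ?_⟩
  exact hrange ▸ subset_range_op_of_isSubgroupUnder hassoc hH hc
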